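/- Let A be a closed subalgebra of C(X) separating points and containing constants, P a closed subset of X with P = ⋂{H : H clopen, χ_H ∈ A, P ⊆ H}. Then every clopen subset of P whose characteristic function lies in A↾P has the form H ∩ P for some clopen H ⊆ X with χ_H ∈ A. -/

import Mathlib

open Classical Set

/-- `χ_H ∈ A`: the characteristic function of `H` belongs to `A`. -/
noncomputable def chiMem {X : Type*} [TopologicalSpace X]
    (A : Subalgebra ℂ C(X, ℂ)) (H : Set X) : Prop :=
  ∃ g ∈ A, ∀ x, g x = if x ∈ H then (1 : ℂ) else 0

/-!
Let `f ∈ A` restrict to `χ_K` on `P`. The values of `f` are close to `{0, 1}` on an open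
neighbourhood `U` of `P`; since `P` is the intersection of the (finitely intersection-closed)
family of clopen `H ⊇ P` with `χ_H ∈ A`, compactness yields such an `H₀ ⊆ U`. Then `g = f · χ_{H₀}`
lies in `A` and takes all its values close to `{0, 1}`. Iterating `u ↦ 3u² - 2u³`, which has
superattracting fixed points `0` and `1`, converges uniformly to the characteristic function of
the clopen set where `g` is close to `1`; as `A` is closed, that function lies in `A`, and on `P`
the set cuts out exactly `K`.
-/

open Filter Topology

section chiMem

variable {X : Type*} [TopologicalSpace X] {A : Subalgebra ℂ C(X, ℂ)}

lemma chiMem_univ (A : Subalgebra ℂ C(X, ℂ)) : chiMem A (univ : Set X) :=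
  ⟨1, A.one_mem, fun _ => by simp⟩

lemma chiMem.inter {H H' : Set X} (h : chiMem A H) (h' : chiMem A H') : chiMem A (H ∩ H') := by
  obtain ⟨g, hg, hgH⟩ := h
  obtain ⟨g', hg', hgH'⟩ := h'
  refine ⟨g * g', A.mul_mem hg hg', fun x => ?_⟩
  by_cases hx : x ∈ H <;> by_cases hx' : x ∈ H' <;> simp [hgH, hgH', hx, hx']

lemma exists_chiMem_superset_subset [CompactSpace X] {P U : Set X}
    (hPt : P = ⋂₀ {H : Set X | IsClopen H ∧ chiMem A H ∧ P ⊆ H}) (hU : IsOpen U) (hPU : P ⊆ U) :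
    ∃ H, (IsClopen H ∧ chiMem A H ∧ P ⊆ H) ∧ H ⊆ U := by
  set 𝓕 := {H : Set X | IsClopen H ∧ chiMem A H ∧ P ⊆ H}
  have : Nonempty 𝓕 := ⟨⟨univ, isClopen_univ, chiMem_univ A, subset_univ P⟩⟩
  have hdir : Directed (· ⊇ ·) (Subtype.val : 𝓕 → Set X) := fun H H' =>
    ⟨⟨H ∩ H', H.2.1.inter H'.2.1, H.2.2.1.inter H'.2.2.1, subset_inter H.2.2.2 H'.2.2.2⟩,
      inter_subset_left, inter_subset_right⟩
  obtain ⟨H, hHU⟩ := exists_subset_nhds_of_isCompact' hdir (fun H => H.2.1.isClosed.isCompact)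
    (fun H => H.2.1.isClosed) fun x hx => hU.mem_nhds <| hPU <| by
      rw [hPt, sInter_eq_iInter]; exact hx
  exact ⟨H, H.2, hHU⟩

end chiMem

def idemStep {R : Type*} [CommRing R] (u : R) : R := 3 * u ^ 2 - 2 * u ^ 3

lemma idemStep_mem {R S : Type*} [CommRing R] [SetLike S R] [SubringClass S R] {s : S} {u : R}
    (hu : u ∈ s) : idemStep u ∈ s :=
  sub_mem (mul_mem (ofNat_mem s 3) (pow_mem hu 2)) (mul_mem (ofNat_mem s 2) (pow_mem hu 3))

lemma map_idemStep {F R S : Type*} [CommRing R] [CommRing S] [FunLike F R S]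
    [RingHomClass F R S] (f : F) (u : R) : f (idemStep u) = idemStep (f u) := by
  simp only [idemStep, map_sub, map_mul, map_pow, map_ofNat]

lemma ContinuousMap.idemStep_iterate_apply {X R : Type*} [TopologicalSpace X] [CommRing R]
    [TopologicalSpace R] [IsTopologicalRing R] (g : C(X, R)) (x : X) (n : ℕ) :
    (idemStep^[n] g) x = idemStep^[n] (g x) :=
  Function.Semiconj.iterate_right
    (map_idemStep ((Pi.evalRingHom (fun _ => R) x).comp ContinuousMap.coeFnRingHom)) n g

lemma norm_idemStep_sub_le {w c : ℂ} {e : ℝ} (hc : c = 0 ∨ c = 1) (hw : ‖w - c‖ ≤ e)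
    (he : e ≤ 1 / 10) : ‖idemStep w - c‖ ≤ e / 2 := by
  obtain ⟨q, hq, hqn⟩ : ∃ q : ℂ, idemStep w - c = (w - c) ^ 2 * q ∧ ‖q‖ ≤ 3 + 2 * ‖w - c‖ := by
    rcases hc with rfl | rfl
    · refine ⟨3 - 2 * w, by unfold idemStep; ring, ?_⟩
      exact (norm_sub_le _ _).trans (by simp)
    · refine ⟨-(3 + 2 * (w - 1)), by unfold idemStep; ring, ?_⟩
      exact (norm_neg _).trans_le ((norm_add_le _ _).trans (by simp))
  have he0 : 0 ≤ e := (norm_nonneg _).trans hw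
  rw [hq, norm_mul, norm_pow]
  calc ‖w - c‖ ^ 2 * ‖q‖ ≤ e ^ 2 * 5 := by gcongr; linarith
    _ ≤ e / 2 := by nlinarith

lemma norm_idemStep_iterate_sub_le {w c : ℂ} (hc : c = 0 ∨ c = 1) (hw : ‖w - c‖ ≤ 1 / 10)
    (n : ℕ) : ‖idemStep^[n] w - c‖ ≤ 1 / 10 * (1 / 2) ^ n := by
  induction n with
  | zero => simpa using hw
  | succ n ih =>
    have hsmall : 1 / 10 * (1 / 2 : ℝ) ^ n ≤ 1 / 10 :=
      mul_le_of_le_one_right (by norm_num) (pow_le_one₀ (by norm_num) (by norm_num))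
    rw [Function.iterate_succ_apply', pow_succ, ← mul_assoc]
    linarith [norm_idemStep_sub_le hc ih hsmall]

lemma isClopen_setOf_norm_sub_one_le {X : Type*} [TopologicalSpace X] {g : X → ℂ}
    (hg : Continuous g) (hgv : ∀ x, ‖g x‖ ≤ 1 / 10 ∨ ‖g x - 1‖ ≤ 1 / 10) :
    IsClopen {x | ‖g x - 1‖ ≤ 1 / 10} := by
  have hcont : Continuous fun x => ‖g x - 1‖ := by fun_prop
  refine ⟨isClosed_le hcont continuous_const, ?_⟩
  convert isOpen_lt hcont (continuous_const (y := (1 / 2 : ℝ))) using 1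
  ext x
  simp only [mem_ofPred_eq]
  refine ⟨fun hx => hx.trans_lt (by norm_num), fun hx => (hgv x).resolve_left fun h => ?_⟩
  have := norm_sub_norm_le (1 : ℂ) (g x)
  rw [norm_sub_rev, norm_one] at this
  linarith

section closed

variable {X : Type*} [TopologicalSpace X] [CompactSpace X] {A : Subalgebra ℂ C(X, ℂ)}

lemma chiMem_of_forall_norm_sub_indicator_le (hAcl : IsClosed (A : Set C(X, ℂ))) {H : Set X}
    (hH : IsClopen H) {g : C(X, ℂ)} (hg : g ∈ A) (hgH : ∀ x, ‖g x - H.indicator 1 x‖ ≤ 1 / 10) :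
    chiMem A H := by
  let χ : C(X, ℂ) := ⟨H.indicator 1, hH.continuous_indicator continuous_const⟩
  have hgeom : Tendsto (fun n : ℕ => 1 / 10 * (1 / 2 : ℝ) ^ n) atTop (𝓝 0) := by
    simpa only [mul_zero] using (tendsto_pow_atTop_nhds_zero_of_lt_one (r := (1 / 2 : ℝ))
      (by norm_num) (by norm_num)).const_mul (1 / 10)
  have hlim : Tendsto (fun n => idemStep^[n] g) atTop (𝓝 χ) := by
    rw [tendsto_iff_dist_tendsto_zero]
    refine squeeze_zero (fun _ => dist_nonneg) (fun n => ?_) hgeom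
    refine (ContinuousMap.dist_le (by positivity)).2 fun x => ?_
    rw [dist_eq_norm, ContinuousMap.idemStep_iterate_apply]
    refine norm_idemStep_iterate_sub_le ?_ (hgH x) n
    by_cases hx : x ∈ H <;> simp [hx]
  refine ⟨χ, hAcl.mem_of_tendsto hlim (Eventually.of_forall fun n => ?_), fun x => ?_⟩
  · exact MapsTo.iterate (fun _ hu => idemStep_mem hu) n hg
  · simp [χ, indicator_apply]

lemma chiMem_setOf_norm_sub_one_le (hAcl : IsClosed (A : Set C(X, ℂ))) {g : C(X, ℂ)} (hg : g ∈ A)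
    (hgv : ∀ x, ‖g x‖ ≤ 1 / 10 ∨ ‖g x - 1‖ ≤ 1 / 10) :
    IsClopen {x | ‖g x - 1‖ ≤ 1 / 10} ∧ chiMem A {x | ‖g x - 1‖ ≤ 1 / 10} := by
  have hH := isClopen_setOf_norm_sub_one_le g.continuous hgv
  refine ⟨hH, chiMem_of_forall_norm_sub_indicator_le hAcl hH hg fun x => ?_⟩
  by_cases hx : ‖g x - 1‖ ≤ 1 / 10
  · simpa only [indicator_of_mem (show x ∈ {x | ‖g x - 1‖ ≤ 1 / 10} from hx), Pi.one_apply]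
  · simpa only [indicator_of_notMem (show x ∉ {x | ‖g x - 1‖ ≤ 1 / 10} from hx), sub_zero]
      using (hgv x).resolve_right hx

end closed

theorem stmt5_general {X : Type*} [TopologicalSpace X] [CompactSpace X]
    (A : Subalgebra ℂ C(X, ℂ))
    (hAcl : IsClosed (A : Set C(X, ℂ)))
    (P : Set X)
    (hPt : P = ⋂₀ {H : Set X | IsClopen H ∧ chiMem A H ∧ P ⊆ H})
    (K : Set P)
    (hchi : ∃ f ∈ A, ∀ x : P, f.restrict P x = if x ∈ K then (1 : ℂ) else 0) :
    ∃ H : Set X, IsClopen H ∧ chiMem A H ∧ K = Subtype.val ⁻¹' H := by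
  obtain ⟨f, hfA, hf⟩ := hchi
  set U := {x | ‖f x‖ < 1 / 10} ∪ {x | ‖f x - 1‖ < 1 / 10}
  have hU : IsOpen U :=
    (isOpen_lt (by fun_prop) continuous_const).union (isOpen_lt (by fun_prop) continuous_const)
  have hPU : P ⊆ U := fun x hx => by
    have hfx : f x = if (⟨x, hx⟩ : P) ∈ K then 1 else 0 := hf ⟨x, hx⟩
    by_cases hk : (⟨x, hx⟩ : P) ∈ K <;> simp [U, hfx, hk]
  obtain ⟨H₀, ⟨-, ⟨g₀, hg₀A, hg₀⟩, hPH₀⟩, hH₀U⟩ := exists_chiMem_superset_subset hPt hU hPU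
  have hg : ∀ x, (f * g₀) x = if x ∈ H₀ then f x else 0 := fun x => by simp [hg₀ x]
  have hgv : ∀ x, ‖(f * g₀) x‖ ≤ 1 / 10 ∨ ‖(f * g₀) x - 1‖ ≤ 1 / 10 := fun x => by
    rw [hg]
    split_ifs with hx
    · exact (hH₀U hx).imp le_of_lt le_of_lt
    · left; norm_num
  obtain ⟨hH, hχ⟩ := chiMem_setOf_norm_sub_one_le hAcl (A.mul_mem hfA hg₀A) hgv
  refine ⟨_, hH, hχ, ?_⟩
  ext x
  have hfx : f x = if x ∈ K then 1 else 0 := hf x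
  by_cases hk : x ∈ K <;> norm_num [hg, hPH₀ x.2, hfx, hk]

/-- If `A ≤ C(X, ℂ)` is a closed subalgebra separating points, and `P` is a closed subset of
`X` with `P = ⋂ {H : H clopen, χ_H ∈ A, P ⊆ H}`, then every clopen subset `K` of `P`
whose characteristic function lies in `A↾P` is of the form `H ∩ P` for some clopen
`H ⊆ X` with `χ_H ∈ A`. -/
theorem stmt5 {X : Type*} [TopologicalSpace X] [CompactSpace X] [T2Space X]
    (A : Subalgebra ℂ C(X, ℂ)) (hA : A.SeparatesPoints)
    (hAcl : IsClosed (A : Set C(X, ℂ)))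
    (P : Set X) (hP : IsClosed P)
    (hPt : P = ⋂₀ {H : Set X | IsClopen H ∧ chiMem A H ∧ P ⊆ H})
    (K : Set P) (hK : IsClopen K)
    (hchi : ∃ f ∈ A, ∀ x : P, f.restrict P x = if x ∈ K then (1 : ℂ) else 0) :
    ∃ H : Set X, IsClopen H ∧ chiMem A H ∧ K = Subtype.val ⁻¹' H :=
  stmt5_general A hAcl P hPt K hchi
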